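/- Let f: ℝ^d → ℝ be differentiable, η > 0, K ∈ ℕ with K ≥ 1, and let (x_k, v_k)_{0≤k≤K} be the leapfrog iterates: given x₀, v₀ ∈ ℝ^d, for 0 ≤ k < K set v_{k+1/2} = v_k − (η/2)∇f(x_k), x_{k+1} = x_k + η v_{k+1/2}, v_{k+1} = v_{k+1/2} − (η/2)∇f(x_{k+1}). With H(x, v) := f(x) + (1/2)‖v‖², one has H(x₀, v₀) − H(x_K, v_K) = ∑_{k=0}^{K−1} ( f(x_k) − f(x_{k+1}) + (1/2)⟨∇f(x_k) + ∇f(x_{k+1}), x_{k+1} − x_k⟩ ) + (η²/8)‖∇f(x₀)‖² − (η²/8)‖∇f(x_K)‖². In particular, if f(x) = (1/2)xᵀAx for a symmetric matrix A, then H(x₀, v₀) − H(x_K, v_K) = (η²/8)‖∇f(x₀)‖² − (η²/8)‖∇f(x_K)‖². -/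

import Mathlib

open scoped RealInnerProductSpace

noncomputable section

abbrev E (d : ℕ) := EuclideanSpace ℝ (Fin d)

/-- One leapfrog step on position-velocity pairs, for gradient field `gradf` and step size `η`. -/
def leapfrogStep {d : ℕ} (gradf : E d → E d) (η : ℝ) (p : E d × E d) : E d × E d :=
  let v' := p.2 - (η / 2) • gradf p.1
  let x' := p.1 + η • v'
  (x', v' - (η / 2) • gradf x')

/-- The leapfrog iterate `(x_k, v_k)` for the potential `f`. -/
def lfIter {d : ℕ} (f : E d → ℝ) (η : ℝ) (x₀ v₀ : E d) (k : ℕ) : E d × E d :=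
  (leapfrogStep (gradient f) η)^[k] (x₀, v₀)

/-- The Hamiltonian `H(x, v) = f(x) + ‖v‖²/2`. -/
def hamiltonian {d : ℕ} (f : E d → ℝ) (p : E d × E d) : ℝ := f p.1 + ‖p.2‖ ^ 2 / 2

lemma lf_key (d : ℕ) (η : ℝ) (vh a b : E d) :
    ‖vh + (η/2)•a‖^2/2 - ‖vh - (η/2)•b‖^2/2 =
      (1/2)*⟪a+b, η•vh⟫ + η^2/8*‖a‖^2 - η^2/8*‖b‖^2 := by
  rw [← real_inner_self_eq_norm_sq, ← real_inner_self_eq_norm_sq,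
    ← real_inner_self_eq_norm_sq, ← real_inner_self_eq_norm_sq]
  simp only [inner_add_left, inner_add_right, inner_sub_left, inner_sub_right,
    inner_smul_left, inner_smul_right, RCLike.ofReal_real_eq_id, id_eq, conj_trivial]
  rw [real_inner_comm vh a, real_inner_comm vh b]
  ring

lemma lf_one_step {d : ℕ} (f : E d → ℝ) (g : E d → E d) (η : ℝ) (p : E d × E d) :
    hamiltonian f p - hamiltonian f (leapfrogStep g η p) =
      f p.1 - f (leapfrogStep g η p).1 +
        (1/2) * ⟪g p.1 + g (leapfrogStep g η p).1, (leapfrogStep g η p).1 - p.1⟫ +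
        η^2/8 * ‖g p.1‖^2 - η^2/8 * ‖g (leapfrogStep g η p).1‖^2 := by
  set q := leapfrogStep g η p with hq
  set vh := p.2 - (η/2) • g p.1 with hvh
  have h1 : q.1 = p.1 + η • vh := rfl
  have h2 : q.2 = vh - (η/2) • g q.1 := rfl
  have h3 : p.2 = vh + (η/2) • g p.1 := by rw [hvh]; abel
  have h4 : q.1 - p.1 = η • vh := by rw [h1]; abel
  have := lf_key d η vh (g p.1) (g q.1)
  simp only [hamiltonian]
  rw [h2, h3, h4]
  linarith

lemma lf_grad_quad {d : ℕ} (T : E d →L[ℝ] E d)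
    (hsym : ∀ x y : E d, ⟪T x, y⟫ = ⟪x, T y⟫) (x : E d) :
    HasGradientAt (fun y => (1/2 : ℝ) * ⟪y, T y⟫) (T x) x := by
  rw [hasGradientAt_iff_hasFDerivAt]
  have h1 : HasFDerivAt (fun y : E d => ⟪y, T y⟫)
      ((fderivInnerCLM ℝ (x, T x)).comp ((ContinuousLinearMap.id ℝ (E d)).prod T)) x :=
    (hasFDerivAt_id x).inner ℝ (T.hasFDerivAt)
  have h2 := h1.const_mul (1/2 : ℝ)
  refine h2.congr_fderiv ?_
  ext h
  rw [InnerProductSpace.toDual_apply_apply]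
  simp only [ContinuousLinearMap.smul_apply, ContinuousLinearMap.coe_comp',
    Function.comp_apply, ContinuousLinearMap.prod_apply, ContinuousLinearMap.coe_id',
    id_eq, fderivInnerCLM_apply, smul_eq_mul]
  rw [← hsym x h, real_inner_comm h (T x)]
  ring

theorem leapfrog_hamiltonian_identity (d : ℕ) (f : E d → ℝ) (hf : Differentiable ℝ f)
    (η : ℝ) (K : ℕ) (hK : 1 ≤ K) (x₀ v₀ : E d) :
    hamiltonian f (x₀, v₀) - hamiltonian f (lfIter f η x₀ v₀ K) =
      (∑ k ∈ Finset.range K,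
        (f (lfIter f η x₀ v₀ k).1 - f (lfIter f η x₀ v₀ (k + 1)).1 +
          (1 / 2) * ⟪gradient f (lfIter f η x₀ v₀ k).1 +
              gradient f (lfIter f η x₀ v₀ (k + 1)).1,
            (lfIter f η x₀ v₀ (k + 1)).1 - (lfIter f η x₀ v₀ k).1⟫)) +
        (η ^ 2 / 8) * ‖gradient f x₀‖ ^ 2 -
        (η ^ 2 / 8) * ‖gradient f (lfIter f η x₀ v₀ K).1‖ ^ 2 ∧
    (∀ A : Matrix (Fin d) (Fin d) ℝ, A.IsSymm →
      (∀ x : E d, f x = (1 / 2) * ⟪x, Matrix.toEuclideanLin A x⟫) →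
      hamiltonian f (x₀, v₀) - hamiltonian f (lfIter f η x₀ v₀ K) =
        (η ^ 2 / 8) * ‖gradient f x₀‖ ^ 2 -
          (η ^ 2 / 8) * ‖gradient f (lfIter f η x₀ v₀ K).1‖ ^ 2) := by
  set g := gradient f with hg
  set S := lfIter f η x₀ v₀ with hS
  have hS0 : S 0 = (x₀, v₀) := rfl
  have hSsucc : ∀ k, S (k + 1) = leapfrogStep g η (S k) := fun k =>
    Function.iterate_succ_apply' _ k _
  have hstep : ∀ k, hamiltonian f (S k) - hamiltonian f (S (k + 1)) =
      (f (S k).1 - f (S (k + 1)).1 +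
        (1/2) * ⟪g (S k).1 + g (S (k + 1)).1, (S (k + 1)).1 - (S k).1⟫) +
      (η^2/8 * ‖g (S k).1‖^2 - η^2/8 * ‖g (S (k + 1)).1‖^2) := by
    intro k
    rw [hSsucc k]
    have := lf_one_step f g η (S k)
    linarith
  have htel : hamiltonian f (x₀, v₀) - hamiltonian f (S K) =
      (∑ k ∈ Finset.range K,
        (f (S k).1 - f (S (k + 1)).1 +
          (1/2) * ⟪g (S k).1 + g (S (k + 1)).1, (S (k + 1)).1 - (S k).1⟫)) +
        (η^2/8 * ‖g x₀‖^2 - η^2/8 * ‖g (S K).1‖^2) := by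
    have t1 : ∑ k ∈ Finset.range K, (hamiltonian f (S k) - hamiltonian f (S (k + 1))) =
        hamiltonian f (S 0) - hamiltonian f (S K) := Finset.sum_range_sub' _ K
    have t2 : ∑ k ∈ Finset.range K, (η^2/8 * ‖g (S k).1‖^2 - η^2/8 * ‖g (S (k + 1)).1‖^2) =
        η^2/8 * ‖g (S 0).1‖^2 - η^2/8 * ‖g (S K).1‖^2 := Finset.sum_range_sub' _ K
    rw [← hS0, ← t1]
    calc ∑ k ∈ Finset.range K, (hamiltonian f (S k) - hamiltonian f (S (k + 1)))
        = ∑ k ∈ Finset.range K,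
          ((f (S k).1 - f (S (k + 1)).1 +
            (1/2) * ⟪g (S k).1 + g (S (k + 1)).1, (S (k + 1)).1 - (S k).1⟫) +
          (η^2/8 * ‖g (S k).1‖^2 - η^2/8 * ‖g (S (k + 1)).1‖^2)) :=
          Finset.sum_congr rfl fun k _ => hstep k
      _ = _ := by rw [Finset.sum_add_distrib, t2]; rfl
  constructor
  · rw [htel]; ring
  · intro A hA hfval
    set L := Matrix.toEuclideanLin A with hL
    set T := LinearMap.toContinuousLinearMap L with hT
    have hTL : ∀ y, T y = L y := fun y => rfl
    have hherm : A.IsHermitian := by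
      rwa [Matrix.IsHermitian, Matrix.conjTranspose_eq_transpose_of_trivial]
    have hsymL := Matrix.isHermitian_iff_isSymmetric.1 hherm
    have hsym : ∀ x y : E d, ⟪T x, y⟫ = ⟪x, T y⟫ := fun x y => hsymL x y
    have hfeq : f = fun y => (1/2 : ℝ) * ⟪y, T y⟫ := by
      funext y; rw [hfval y]; rfl
    have hgrad : ∀ x : E d, g x = T x := by
      intro x
      rw [hg, hfeq]
      exact (lf_grad_quad T hsym x).gradient
    have hzero : ∀ a b : E d,
        f a - f b + (1/2) * ⟪g a + g b, b - a⟫ = 0 := by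
      intro a b
      rw [hgrad a, hgrad b, hfeq]
      simp only [inner_add_left, inner_sub_right]
      rw [hsym a b, real_inner_comm b (T b), real_inner_comm a (T a),
        real_inner_comm (T b) a]
      ring
    rw [htel]
    rw [Finset.sum_congr rfl fun k _ => hzero (S k).1 (S (k+1)).1]
    simp
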